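/- arXiv:2209.02357 — 2 statements merged into one kernel-verified Lean document; each statement's English description precedes it below -/
import Mathlib

section
/- Let (C,∇,g,θ) be a compact radiant l.c.H. manifold with Lee vector field ξ, ∇ξ = μ·Id for a constant μ, and a = g(ξ,ξ). Set u = −μ − a. Then u ≠ 0 and u·g = ∇θ − θ⊗θ, where ∇θ denotes the covariant derivative of the Lee form (∇θ)(X,Y) = X(θ(Y)) − θ(∇_X Y). -/
open Bundle Set TopologicalSpace
open scoped Manifold Topology

noncomputable section

namespace LCH

variable {E : Type*} [NormedAddCommGroup E] [NormedSpace ℝ E]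
  {H : Type*} [TopologicalSpace H] (I : ModelWithCorners ℝ E H)
  (M : Type*) [TopologicalSpace M] [ChartedSpace H M] [IsManifold I (⊤ : ℕ∞) M]

/-- A vector field on a manifold: an assignment of tangent vectors to points. -/
abbrev VectorField : Type _ := ∀ x : M, TangentSpace I x

variable {M}

/-- A vector field is smooth if it is smooth as a section of the tangent bundle. -/
def IsSmoothVF (X : VectorField I M) : Prop :=
  ContMDiff I I.tangent (⊤ : ℕ∞) (fun x => (⟨x, X x⟩ : TangentBundle I M))

/-- A real valued function on a manifold is smooth. -/
def IsSmoothF (f : M → ℝ) : Prop := ContMDiff I 𝓘(ℝ) (⊤ : ℕ∞) f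

/-- The derivative of a function along a vector field. -/
def dirDeriv (X : VectorField I M) (f : M → ℝ) : M → ℝ :=
  fun x => mfderiv I 𝓘(ℝ) f x (X x)

/-- `B` is the Lie bracket `[X, Y]` of the vector fields `X` and `Y`:
it acts on smooth functions as the commutator of `X` and `Y`. -/
def IsBracket (X Y B : VectorField I M) : Prop :=
  ∀ f : M → ℝ, IsSmoothF I f →
    dirDeriv I B f = fun x => dirDeriv I X (dirDeriv I Y f) x - dirDeriv I Y (dirDeriv I X f) x

variable (M)

/-- An affine connection on a manifold, acting on vector fields. -/
structure Connection where
  op : VectorField I M → VectorField I M → VectorField I M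
  smooth : ∀ X Y, IsSmoothVF I X → IsSmoothVF I Y → IsSmoothVF I (op X Y)
  add_left : ∀ X X' Y, op (fun x => X x + X' x) Y = fun x => op X Y x + op X' Y x
  fsmul_left : ∀ (f : M → ℝ) (X Y), op (fun x => f x • X x) Y = fun x => f x • op X Y x
  add_right : ∀ X Y Y', op X (fun x => Y x + Y' x) = fun x => op X Y x + op X Y' x
  leibniz : ∀ (f : M → ℝ) (X Y), IsSmoothF I f →
    op X (fun x => f x • Y x) = fun x => f x • op X Y x + dirDeriv I X f x • Y x

/-- A Riemannian metric: a smooth positive definite symmetric bilinear form on each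
tangent space. -/
structure RiemannianMetric where
  val : ∀ x : M, TangentSpace I x → TangentSpace I x → ℝ
  smooth : ∀ X Y : VectorField I M, IsSmoothVF I X → IsSmoothVF I Y →
    IsSmoothF I (fun x => val x (X x) (Y x))
  symm : ∀ x u v, val x u v = val x v u
  add_left : ∀ x u u' v, val x (u + u') v = val x u v + val x u' v
  smul_left : ∀ x (c : ℝ) u v, val x (c • u) v = c * val x u v
  posdef : ∀ x v, v ≠ 0 → 0 < val x v v

/-- A 1-form on a manifold. -/
structure OneForm where
  val : ∀ x : M, TangentSpace I x → ℝ
  smooth : ∀ X : VectorField I M, IsSmoothVF I X → IsSmoothF I (fun x => val x (X x))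
  add : ∀ x u v, val x (u + v) = val x u + val x v
  smul : ∀ x (c : ℝ) v, val x (c • v) = c * val x v

variable {I M}

/-- A connection is torsion-free if `∇_X Y - ∇_Y X = [X, Y]`. -/
def Connection.IsTorsionFree (C : Connection I M) : Prop :=
  ∀ X Y, IsSmoothVF I X → IsSmoothVF I Y →
    IsBracket I X Y (fun x => C.op X Y x - C.op Y X x)

/-- A connection is flat (has identically vanishing curvature tensor):
`∇_X ∇_Y Z - ∇_Y ∇_X Z - ∇_[X,Y] Z = 0`. -/
def Connection.IsFlat (C : Connection I M) : Prop :=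
  ∀ X Y Z B, IsSmoothVF I X → IsSmoothVF I Y → IsSmoothVF I Z → IsBracket I X Y B →
    ∀ x, C.op X (C.op Y Z) x - C.op Y (C.op X Z) x - C.op B Z x = 0

/-- A flat affine structure: a flat torsion-free affine connection. -/
def Connection.IsFlatAffine (C : Connection I M) : Prop :=
  C.IsTorsionFree ∧ C.IsFlat

/-- The covariant derivative `(∇g)(X, Y, Z)` of a metric `g` with respect to a
connection `∇`:  `(∇g)(X,Y,Z) = X(g(Y,Z)) - g(∇_X Y, Z) - g(Y, ∇_X Z)`. -/
def covDerivMetric (C : Connection I M) (g : RiemannianMetric I M)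
    (X Y Z : VectorField I M) : M → ℝ :=
  fun x => dirDeriv I X (fun y => g.val y (Y y) (Z y)) x
    - g.val x (C.op X Y x) (Z x) - g.val x (Y x) (C.op X Z x)

/-- The covariant derivative `(∇θ)(X, Y) = X(θ(Y)) - θ(∇_X Y)` of a 1-form. -/
def covDerivOneForm (C : Connection I M) (θ : OneForm I M)
    (X Y : VectorField I M) : M → ℝ :=
  fun x => dirDeriv I X (fun y => θ.val y (Y y)) x - θ.val x (C.op X Y x)

/-- A (0,3)-tensor given on triples of vector fields is totally symmetric. -/
def IsTotallySymmetric (T : VectorField I M → VectorField I M → VectorField I M → M → ℝ) :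
    Prop :=
  ∀ X Y Z, IsSmoothVF I X → IsSmoothVF I Y → IsSmoothVF I Z →
    T X Y Z = T Y X Z ∧ T X Y Z = T X Z Y

/-- A Hessian structure: a flat affine connection together with a Riemannian
metric whose covariant derivative is totally symmetric. -/
def IsHessian (C : Connection I M) (g : RiemannianMetric I M) : Prop :=
  C.IsFlatAffine ∧ IsTotallySymmetric (covDerivMetric C g)

/-- A 1-form is closed: `dθ(X,Y) = X(θ(Y)) - Y(θ(X)) - θ([X,Y]) = 0`. -/
def OneForm.IsClosed (θ : OneForm I M) : Prop :=
  ∀ X Y B, IsSmoothVF I X → IsSmoothVF I Y → IsBracket I X Y B →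
    ∀ x, dirDeriv I X (fun y => θ.val y (Y y)) x - dirDeriv I Y (fun y => θ.val y (X y)) x
      - θ.val x (B x) = 0

/-- A locally conformally Hessian structure: a flat affine connection `∇`, a
Riemannian metric `g` and a closed 1-form `θ` such that `∇g - θ ⊗ g` is totally
symmetric. -/
def IsLcH (C : Connection I M) (g : RiemannianMetric I M) (θ : OneForm I M) : Prop :=
  C.IsFlatAffine ∧ θ.IsClosed ∧
    IsTotallySymmetric (fun X Y Z x => covDerivMetric C g X Y Z x
      - θ.val x (X x) * g.val x (Y x) (Z x))

/-- `ξ` is the Lee vector field of the l.c.H. structure: the `g`-dual of `θ`. -/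
def IsLeeField (g : RiemannianMetric I M) (θ : OneForm I M) (ξ : VectorField I M) : Prop :=
  IsSmoothVF I ξ ∧ ∀ x v, g.val x (ξ x) v = θ.val x v

/-- The Lie derivative of the metric `g` along the vector field `ξ` equals `c • g`:
`ξ(g(X,Y)) = g([ξ,X],Y) + g(X,[ξ,Y]) + c g(X,Y)` for all smooth `X`, `Y`. -/
def LieDerivMetricEq (g : RiemannianMetric I M) (ξ : VectorField I M) (c : ℝ) : Prop :=
  ∀ X Y BX BY, IsSmoothVF I X → IsSmoothVF I Y →
    IsBracket I ξ X BX → IsBracket I ξ Y BY →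
    ∀ x, dirDeriv I ξ (fun y => g.val y (X y) (Y y)) x
      = g.val x (BX x) (Y x) + g.val x (X x) (BY x) + c * g.val x (X x) (Y x)

/-- A vector field is Killing: the Lie derivative of the metric along it vanishes. -/
def IsKilling (g : RiemannianMetric I M) (ξ : VectorField I M) : Prop :=
  LieDerivMetricEq g ξ 0

/-- A vector field is affine: its flow preserves the connection, i.e. the Lie
derivative of the connection along it vanishes:
`[ξ, ∇_X Y] = ∇_[ξ,X] Y + ∇_X [ξ,Y]`. -/
def IsAffineField (C : Connection I M) (ξ : VectorField I M) : Prop :=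
  ∀ X Y B BX BY, IsSmoothVF I X → IsSmoothVF I Y →
    IsBracket I ξ (C.op X Y) B → IsBracket I ξ X BX → IsBracket I ξ Y BY →
    ∀ x, B x = C.op BX Y x + C.op X BY x

/-- `∇ ξ = μ · Id`. -/
def NablaEqSmulId (C : Connection I M) (ξ : VectorField I M) (μ : ℝ) : Prop :=
  ∀ X, IsSmoothVF I X → C.op X ξ = fun x => μ • X x

/-- A self-similar Hessian structure: a Hessian structure with a smooth affine
vector field `ξ` such that `L_ξ g = 2 g`. -/
def IsSelfSimilarHessian (C : Connection I M) (g : RiemannianMetric I M)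
    (ξ : VectorField I M) : Prop :=
  IsHessian C g ∧ IsSmoothVF I ξ ∧ IsAffineField C ξ ∧ LieDerivMetricEq g ξ 2

/-- A radiant Hessian structure: a self-similar Hessian structure with
`∇ ξ = λ · Id` for a constant `λ`. -/
def IsRadiantHessian (C : Connection I M) (g : RiemannianMetric I M)
    (ξ : VectorField I M) (lam : ℝ) : Prop :=
  IsSelfSimilarHessian C g ξ ∧ NablaEqSmulId C ξ lam

/-- A radiant l.c.H. structure: an l.c.H. structure whose Lee vector field `ξ` is
Killing and satisfies `∇ ξ = μ · Id` for a constant `μ ∉ {-a, 0}`, where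
`a = g(ξ,ξ)` is the (constant) squared norm of the Lee field. -/
def IsRadiantLcH (C : Connection I M) (g : RiemannianMetric I M) (θ : OneForm I M)
    (ξ : VectorField I M) (a μ : ℝ) : Prop :=
  IsLcH C g θ ∧ IsLeeField g θ ξ ∧ IsKilling g ξ ∧
    (∀ x, g.val x (ξ x) (ξ x) = a) ∧ μ ≠ 0 ∧ μ ≠ -a ∧ NablaEqSmulId C ξ μ

/-- A statistical structure: a torsion-free connection `D` and a Riemannian metric `g`
such that `Dg` is totally symmetric. -/
def IsStatistical (D : Connection I M) (g : RiemannianMetric I M) : Prop :=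
  D.IsTorsionFree ∧ IsTotallySymmetric (covDerivMetric D g)

/-- A statistical structure has constant curvature `c`:
`Θ_D(X,Y)Z = c (g(Y,Z) X - g(X,Z) Y)`. -/
def HasConstantCurvature (D : Connection I M) (g : RiemannianMetric I M) (c : ℝ) : Prop :=
  ∀ X Y Z B, IsSmoothVF I X → IsSmoothVF I Y → IsSmoothVF I Z → IsBracket I X Y B →
    ∀ x, D.op X (D.op Y Z) x - D.op Y (D.op X Z) x - D.op B Z x
      = c • (g.val x (Y x) (Z x) • X x - g.val x (X x) (Z x) • Y x)

section TwoManifolds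

variable {E' : Type*} [NormedAddCommGroup E'] [NormedSpace ℝ E']
  {H' : Type*} [TopologicalSpace H'] {I' : ModelWithCorners ℝ E' H'}
  {N : Type*} [TopologicalSpace N] [ChartedSpace H' N] [IsManifold I' (⊤ : ℕ∞) N]

/-- The vector fields `X` on `M` and `X'` on `N` are `φ`-related
(`dφ (X x) = X' (φ x)`). -/
def Related (φ : M → N) (X : VectorField I M) (X' : VectorField I' N) : Prop :=
  ∀ x, mfderiv I I' φ x (X x) = X' (φ x)

end TwoManifolds

/-- A diffeomorphism preserves a Riemannian metric. -/
def PreservesMetric (φ : M → M) (g : RiemannianMetric I M) : Prop :=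
  ∀ x (v w : TangentSpace I x),
    g.val (φ x) (mfderiv I I φ x v) (mfderiv I I φ x w) = g.val x v w

/-- A diffeomorphism preserves a connection: it maps `φ`-related pairs of vector
fields to `φ`-related covariant derivatives. -/
def PreservesConnection (φ : M → M) (C : Connection I M) : Prop :=
  ∀ X Y X' Y', IsSmoothVF I X → IsSmoothVF I Y →
    Related φ X X' → Related φ Y Y' →
    Related φ (C.op X Y) (C.op X' Y')

/-- A 1-form is preserved by a diffeomorphism. -/
def PreservesOneForm (φ : M → M) (θ : OneForm I M) : Prop :=
  ∀ x (v : TangentSpace I x), θ.val (φ x) (mfderiv I I φ x v) = θ.val x v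

/-- An automorphism of a statistical manifold `(M, D, g)`: a diffeomorphism of `M`
preserving both `D` and `g`. -/
def IsStatAutomorphism (D : Connection I M) (g : RiemannianMetric I M) (φ : M → M) : Prop :=
  ContMDiff I I (⊤ : ℕ∞) φ ∧
    (∃ ψ : M → M, ContMDiff I I (⊤ : ℕ∞) ψ ∧ Function.LeftInverse ψ φ ∧
      Function.RightInverse ψ φ) ∧
    PreservesMetric φ g ∧ PreservesConnection φ D

/-- The positive half-line `ℝ^{>0}`, as an open submanifold of `ℝ`. -/
abbrev Rpos : Opens ℝ := ⟨Set.Ioi 0, isOpen_Ioi⟩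

variable (I M) in
/-- The vector field `s ∂/∂s` on the product `M × ℝ^{>0}`. -/
def radField : VectorField (I.prod 𝓘(ℝ)) (M × ↥Rpos) :=
  fun p => ((0 : E), (p.2 : ℝ))

/-- `g_N` is the cone metric `s² g_M + ds²` on `M × ℝ^{>0}`. -/
def IsConeMetric (gM : RiemannianMetric I M)
    (gN : RiemannianMetric (I.prod 𝓘(ℝ)) (M × ↥Rpos)) : Prop :=
  ∀ p (v w : TangentSpace (I.prod 𝓘(ℝ)) p),
    gN.val p v w = ((p.2 : ℝ)) ^ 2 * gM.val p.1 v.1 w.1 + v.2 * w.2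

/-- `g_N` is the metric `g_M + ds²/s²` on `M × ℝ^{>0}`. -/
def IsCylinderMetric (gM : RiemannianMetric I M)
    (gN : RiemannianMetric (I.prod 𝓘(ℝ)) (M × ↥Rpos)) : Prop :=
  ∀ p (v w : TangentSpace (I.prod 𝓘(ℝ)) p),
    gN.val p v w = gM.val p.1 v.1 w.1 + v.2 * w.2 / ((p.2 : ℝ)) ^ 2

/-- `θ` is the 1-form `- 2 ds / s` on `M × ℝ^{>0}`. -/
def IsMinusTwoDsOverS (θ : OneForm (I.prod 𝓘(ℝ)) (M × ↥Rpos)) : Prop :=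
  ∀ p (v : TangentSpace (I.prod 𝓘(ℝ)) p), θ.val p v = -2 * v.2 / ((p.2 : ℝ))

variable (M) in
/-- The map `φ_q (m, t) = (φ m, q t)` on `M × ℝ^{>0}`. -/
def phiQ (φ : M → M) (q : ℝ) (hq : 0 < q) : M × ↥Rpos → M × ↥Rpos :=
  fun p => (φ p.1, ⟨q * (p.2 : ℝ), by exact mul_pos hq p.2.2⟩)

/-- Two points lie in the same orbit of the map `f`. -/
def SameOrbit {α : Type*} (f : α → α) (p p' : α) : Prop :=
  ∃ n : ℕ, f^[n] p = p' ∨ f^[n] p' = p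

/-- The period of the closed 1-form `θ` over the loop `γ`. -/
def period (θ : OneForm I M) (γ : ℝ → M) : ℝ :=
  ∫ t in (0:ℝ)..1, θ.val (γ t) (mfderiv 𝓘(ℝ) I γ t (show TangentSpace 𝓘(ℝ) t from (1:ℝ)))

/-- The group of periods of a closed 1-form: the subgroup of `ℝ` generated by the
integrals of `θ` over smooth loops.  This is the monodromy group of the weight
bundle, i.e. the image of the character `χ` (written additively). -/
def periodGroup (θ : OneForm I M) : AddSubgroup ℝ :=
  AddSubgroup.closure {p : ℝ | ∃ γ : ℝ → M, ContMDiff 𝓘(ℝ) I (⊤ : ℕ∞) γ ∧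
    (∀ t, γ (t + 1) = γ t) ∧ p = period θ γ}

/-- An l.c.H. structure has l.c.H. rank 1: the monodromy group of the weight bundle
(the group of periods of the Lee form) is an infinite cyclic (rank 1) subgroup. -/
def HasLcHRankOne (θ : OneForm I M) : Prop :=
  ∃ r : ℝ, r ≠ 0 ∧ periodGroup θ = AddSubgroup.zmultiples r

/-- The second covariant derivative (Hessian) of a function with respect to a
connection: `Hess φ (X,Y) = X (Y φ) - (∇_X Y) φ`. -/
def hessFn (C : Connection I M) (φ : M → ℝ) (X Y : VectorField I M) : M → ℝ :=
  fun x => dirDeriv I X (dirDeriv I Y φ) x - dirDeriv I (C.op X Y) φ x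

/-- The 1-form `ι_ξ g` is closed. -/
def IsClosedDualForm (g : RiemannianMetric I M) (ξ : VectorField I M) : Prop :=
  ∀ X Y B, IsSmoothVF I X → IsSmoothVF I Y → IsBracket I X Y B →
    ∀ x, dirDeriv I X (fun y => g.val y (ξ y) (Y y)) x
      - dirDeriv I Y (fun y => g.val y (ξ y) (X y)) x - g.val x (ξ x) (B x) = 0

/-- A Riemannian manifold is locally conformally flat: every point has an open
neighbourhood `U` and a positive smooth conformal factor `φ` on `U` such that
`φ · g` restricted to `U` is a flat Riemannian metric (i.e. it admits a torsion-free
metric-compatible connection with vanishing curvature). -/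
def IsLocallyConformallyFlat (g : RiemannianMetric I M) : Prop :=
  ∀ x : M, ∃ U : Opens M, x ∈ U ∧
    ∃ (gU : RiemannianMetric I U) (φ : U → ℝ) (D : Connection I U),
      IsSmoothF I φ ∧ (∀ u : U, 0 < φ u) ∧
      (∀ (u : U) (v w : TangentSpace I u), gU.val u v w = φ u * g.val (u : M) v w) ∧
      D.IsTorsionFree ∧ D.IsFlat ∧
      (∀ X Y Z, IsSmoothVF I X → IsSmoothVF I Y → IsSmoothVF I Z →
        covDerivMetric D gU X Y Z = fun _ => 0)

section Covering

variable {M' : Type*} [TopologicalSpace M'] [ChartedSpace H M'] [IsManifold I (⊤ : ℕ∞) M']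

/-- `(M', g')`, together with the covering map `pr` and the potential `f`, is a Hessian
covering of the l.c.H. manifold `(M, g, θ)`: `π` is a smooth covering map,
`df = π*θ`, and `g' = e^{-f} π*g`.  (The minimal Hessian covering is of this form.) -/
def IsHessianCovering (pr : M' → M) (g : RiemannianMetric I M) (θ : OneForm I M)
    (f : M' → ℝ) (g' : RiemannianMetric I M') : Prop :=
  IsCoveringMap pr ∧ ContMDiff I I (⊤ : ℕ∞) pr ∧ IsSmoothF I f ∧
    (∀ (x' : M') (v : TangentSpace I x'),
      mfderiv I 𝓘(ℝ) f x' v = θ.val (pr x') (mfderiv I I pr x' v)) ∧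
    (∀ (x' : M') (v w : TangentSpace I x'),
      g'.val x' v w
        = Real.exp (-(f x')) * g.val (pr x') (mfderiv I I pr x' v) (mfderiv I I pr x' w))

end Covering

/-! Apply the symmetry of `∇g - θ ⊗ g` in its first two slots to `(X, ξ, Y)`. Since `g(ξ, ·) = θ`
and `∇ξ = μ Id`, the term `(∇_X g)(ξ, Y)` is `(∇θ)(X, Y) - μ g(X, Y)`; since `ξ` is Killing and `∇`
is torsion-free, `∇_ξ g = -2μ g`. With `θ(ξ) = g(ξ, ξ) = a` this is `(-μ - a) g = ∇θ - θ ⊗ θ`,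
and `-μ - a ≠ 0` is the radiance condition `μ ≠ -a`. -/

namespace RiemannianMetric

variable (g : RiemannianMetric I M) (x : M)

theorem val_smul_right (c : ℝ) (u v : TangentSpace I x) :
    g.val x u (c • v) = c * g.val x u v := by
  rw [g.symm, g.smul_left, g.symm]

theorem val_sub_left (u u' v : TangentSpace I x) :
    g.val x (u - u') v = g.val x u v - g.val x u' v := by
  rw [sub_eq_add_neg, g.add_left, ← neg_one_smul ℝ u', g.smul_left]
  ring

theorem val_sub_right (u v v' : TangentSpace I x) :
    g.val x u (v - v') = g.val x u v - g.val x u v' := by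
  rw [g.symm, val_sub_left, g.symm, g.symm x v']

end RiemannianMetric

variable {C : Connection I M} {g : RiemannianMetric I M} {θ : OneForm I M}
  {ξ X Y : VectorField I M} {μ : ℝ}

theorem covDerivMetric_dual_eq (hdual : ∀ x v, g.val x (ξ x) v = θ.val x v)
    (hξ : NablaEqSmulId C ξ μ) (hX : IsSmoothVF I X) (x : M) :
    covDerivMetric C g X ξ Y x = covDerivOneForm C θ X Y x - μ * g.val x (X x) (Y x) := by
  simp only [covDerivMetric, covDerivOneForm, hξ X hX, g.smul_left, hdual]
  ring

/-- Torsion-freeness turns `[ξ, X]` into `∇_ξ X - μ X`, so the Lie derivative of `g` along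
`ξ` differs from `∇_ξ g` by `2μ g`. -/
theorem covDerivMetric_eq_of_lieDerivMetricEq {c : ℝ} (hC : C.IsTorsionFree)
    (hξs : IsSmoothVF I ξ) (hξ : NablaEqSmulId C ξ μ) (hL : LieDerivMetricEq g ξ c)
    (hX : IsSmoothVF I X) (hY : IsSmoothVF I Y) (x : M) :
    covDerivMetric C g ξ X Y x = (c - 2 * μ) * g.val x (X x) (Y x) := by
  have hLie := hL X Y _ _ hX hY (hC ξ X hξs hX) (hC ξ Y hξs hY) x
  simp only [hξ X hX, hξ Y hY, g.val_sub_left, g.val_sub_right, g.smul_left,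
    g.val_smul_right] at hLie
  simp only [covDerivMetric, hLie]
  ring

theorem statement14_general (A : Connection I M) (g : RiemannianMetric I M)
    (θ : OneForm I M) (ξ : VectorField I M) (a μ : ℝ)
    (h : IsRadiantLcH A g θ ξ a μ) :
    -μ - a ≠ 0 ∧
      ∀ X Y, IsSmoothVF I X → IsSmoothVF I Y → ∀ x,
        (-μ - a) * g.val x (X x) (Y x)
          = covDerivOneForm A θ X Y x - θ.val x (X x) * θ.val x (Y x) := by
  obtain ⟨⟨⟨hTF, -⟩, -, hsym⟩, ⟨hξs, hdual⟩, hkill, ha, -, hμa, hξ⟩ := h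
  refine ⟨fun h0 => hμa (by linarith), fun X Y hX hY x => ?_⟩
  have hswap : covDerivMetric A g X ξ Y x - θ.val x (X x) * g.val x (ξ x) (Y x)
      = covDerivMetric A g ξ X Y x - θ.val x (ξ x) * g.val x (X x) (Y x) :=
    congrFun (hsym X ξ Y hX hξs hY).1 x
  have hθξ : θ.val x (ξ x) = a := hdual x (ξ x) ▸ ha x
  rw [covDerivMetric_dual_eq hdual hξ hX,
    covDerivMetric_eq_of_lieDerivMetricEq hTF hξs hξ hkill hX hY, hdual, hθξ] at hswap
  linarith

/-- Let `(M, ∇, g, θ)` be a compact radiant l.c.H. manifold with Lee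
vector field `ξ`, `∇ ξ = μ · Id` and `a = g(ξ,ξ)`.  Set `u = -μ - a`.  Then `u ≠ 0`
and `u g = ∇θ - θ ⊗ θ`. -/
theorem statement14 [CompactSpace M] (A : Connection I M) (g : RiemannianMetric I M)
    (θ : OneForm I M) (ξ : VectorField I M) (a μ : ℝ)
    (h : IsRadiantLcH A g θ ξ a μ) :
    -μ - a ≠ 0 ∧
      ∀ X Y, IsSmoothVF I X → IsSmoothVF I Y → ∀ x,
        (-μ - a) * g.val x (X x) (Y x)
          = covDerivOneForm A θ X Y x - θ.val x (X x) * θ.val x (Y x) :=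
  statement14_general A g θ ξ a μ h

end LCH
end
end

section
/- Let (C,∇) be a flat affine manifold and θ a closed 1-form on C such that the bilinear form g_θ := ∇θ − θ⊗θ is positive definite, where (∇θ)(X,Y) = X(θ(Y)) − θ(∇_X Y). Then (C, ∇, g_θ, θ) is an l.c.H. manifold. -/
open Bundle Set TopologicalSpace
open scoped Manifold Topology

noncomputable section

/-! Write `g = ∇θ - θ ⊗ θ`. Expanding `∇g` by the Leibniz rule gives
`(∇g)(X,Y,Z) - θ(X) g(Y,Z) = (∇²θ)(X,Y,Z) - (∇θ)(X,Y) θ(Z) - θ(Y) (∇θ)(X,Z) - θ(X) (∇θ)(Y,Z)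
  + θ(X) θ(Y) θ(Z)`,
in which only `(∇²θ)(X,Y,Z)` and `(∇θ)(X,Y)` are not visibly symmetric in `X, Y`. By the Ricci
identity `(∇²θ)(X,Y,Z) - (∇²θ)(Y,X,Z) = -θ(R(X,Y)Z)`, which vanishes as `∇` is flat, and since `∇`
is torsion-free, `(∇θ)(X,Y) - (∇θ)(Y,X) = dθ(X,Y) = 0`. Symmetry in `Y, Z` is that of `g`. -/

namespace LCH

variable {E : Type*} [NormedAddCommGroup E] [NormedSpace ℝ E]
  {H : Type*} [TopologicalSpace H] {I : ModelWithCorners ℝ E H}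
  {M : Type*} [TopologicalSpace M] [ChartedSpace H M]

theorem IsSmoothF.mdifferentiableAt {f : M → ℝ} (hf : IsSmoothF I f) (x : M) :
    MDifferentiableAt I 𝓘(ℝ) f x :=
  ContMDiff.mdifferentiableAt hf (by simp)

theorem dirDeriv_sub_left (X Y : VectorField I M) (f : M → ℝ) (x : M) :
    dirDeriv I (fun y => X y - Y y) f x = dirDeriv I X f x - dirDeriv I Y f x :=
  map_sub _ _ _

theorem dirDeriv_sub_right (X : VectorField I M) {f h : M → ℝ} {x : M}
    (hf : MDifferentiableAt I 𝓘(ℝ) f x) (hh : MDifferentiableAt I 𝓘(ℝ) h x) :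
    dirDeriv I X (fun y => f y - h y) x = dirDeriv I X f x - dirDeriv I X h x := by
  have hd := hf.hasMFDerivAt.sub hh.hasMFDerivAt
  exact congrArg (fun L : TangentSpace I x →L[ℝ] ℝ => L (X x)) hd.mfderiv

theorem dirDeriv_mul_right (X : VectorField I M) {f h : M → ℝ} {x : M}
    (hf : MDifferentiableAt I 𝓘(ℝ) f x) (hh : MDifferentiableAt I 𝓘(ℝ) h x) :
    dirDeriv I X (fun y => f y * h y) x = f x * dirDeriv I X h x + h x * dirDeriv I X f x := by
  have hd := hf.hasMFDerivAt.mul hh.hasMFDerivAt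
  exact congrArg (fun L : TangentSpace I x →L[ℝ] ℝ => L (X x)) hd.mfderiv

variable [IsManifold I (⊤ : ℕ∞) M]

theorem IsSmoothF.dirDeriv {X : VectorField I M} {f : M → ℝ} (hX : IsSmoothVF I X)
    (hf : IsSmoothF I f) : IsSmoothF I (dirDeriv I X f) := by
  have hT : ContMDiff I.tangent 𝓘(ℝ).tangent (⊤ : ℕ∞) (tangentMap I 𝓘(ℝ) f) :=
    ContMDiff.contMDiff_tangentMap hf le_rfl
  exact (contMDiff_snd_tangentBundle_modelSpace ℝ 𝓘(ℝ)).comp (hT.comp hX)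

theorem OneForm.val_sub (θ : OneForm I M) (x : M) (u v : TangentSpace I x) :
    θ.val x (u - v) = θ.val x u - θ.val x v := by
  rw [eq_sub_iff_add_eq, ← θ.add, sub_add_cancel]

theorem Connection.op_sub_left (A : Connection I M) (X X' Y : VectorField I M) :
    A.op (fun x => X x - X' x) Y = fun x => A.op X Y x - A.op X' Y x := by
  have h : (fun x => X x - X' x) = fun x => X x + (fun _ => (-1 : ℝ)) x • X' x := by
    funext x
    module
  rw [h, A.add_left, A.fsmul_left]
  funext x
  module

theorem isSmoothF_covDerivOneForm (A : Connection I M) (θ : OneForm I M)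
    {X Y : VectorField I M} (hX : IsSmoothVF I X) (hY : IsSmoothVF I Y) :
    IsSmoothF I (covDerivOneForm A θ X Y) :=
  ContMDiff.sub ((θ.smooth Y hY).dirDeriv hX) (θ.smooth _ (A.smooth X Y hX hY))

theorem covDerivOneForm_comm {A : Connection I M} {θ : OneForm I M} (hA : A.IsTorsionFree)
    (hθ : θ.IsClosed) {X Y : VectorField I M} (hX : IsSmoothVF I X) (hY : IsSmoothVF I Y) :
    covDerivOneForm A θ X Y = covDerivOneForm A θ Y X := by
  funext x
  have h := hθ X Y _ hX hY (hA X Y hX hY) x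
  rw [θ.val_sub] at h
  simp only [covDerivOneForm]
  linarith

def covDeriv2OneForm (A : Connection I M) (θ : OneForm I M) (X Y Z : VectorField I M) :
    M → ℝ :=
  fun x => dirDeriv I X (covDerivOneForm A θ Y Z) x - covDerivOneForm A θ (A.op X Y) Z x
    - covDerivOneForm A θ Y (A.op X Z) x

theorem covDeriv2OneForm_comm {A : Connection I M} (hA : A.IsFlatAffine) (θ : OneForm I M)
    {X Y Z : VectorField I M} (hX : IsSmoothVF I X) (hY : IsSmoothVF I Y)
    (hZ : IsSmoothVF I Z) : covDeriv2OneForm A θ X Y Z = covDeriv2OneForm A θ Y X Z := by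
  funext x
  have hθZ := θ.smooth Z hZ
  have hbracket : IsBracket I X Y (fun y => A.op X Y y - A.op Y X y) := hA.1 X Y hX hY
  have hflat : θ.val x (A.op X (A.op Y Z) x) - θ.val x (A.op Y (A.op X Z) x)
      = θ.val x (A.op (A.op X Y) Z x) - θ.val x (A.op (A.op Y X) Z x) := by
    have h := hA.2 X Y Z _ hX hY hZ hbracket x
    rw [A.op_sub_left, sub_sub, sub_eq_zero] at h
    rw [h, θ.add, θ.val_sub]
    ring
  have hcomm : dirDeriv I (A.op X Y) (fun y => θ.val y (Z y)) x
      - dirDeriv I (A.op Y X) (fun y => θ.val y (Z y)) x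
      = dirDeriv I X (dirDeriv I Y fun y => θ.val y (Z y)) x
        - dirDeriv I Y (dirDeriv I X fun y => θ.val y (Z y)) x := by
    rw [← dirDeriv_sub_left, hbracket _ hθZ]
  have hXYZ : dirDeriv I X (covDerivOneForm A θ Y Z) x
      = dirDeriv I X (dirDeriv I Y fun y => θ.val y (Z y)) x
        - dirDeriv I X (fun y => θ.val y (A.op Y Z y)) x :=
    dirDeriv_sub_right X ((hθZ.dirDeriv hY).mdifferentiableAt x)
      ((θ.smooth _ (A.smooth Y Z hY hZ)).mdifferentiableAt x)
  have hYXZ : dirDeriv I Y (covDerivOneForm A θ X Z) x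
      = dirDeriv I Y (dirDeriv I X fun y => θ.val y (Z y)) x
        - dirDeriv I Y (fun y => θ.val y (A.op X Z y)) x :=
    dirDeriv_sub_right Y ((hθZ.dirDeriv hX).mdifferentiableAt x)
      ((θ.smooth _ (A.smooth X Z hX hZ)).mdifferentiableAt x)
  simp only [covDeriv2OneForm]
  rw [hXYZ, hYXZ]
  simp only [covDerivOneForm]
  linear_combination -hcomm - hflat

theorem covDerivMetric_swap_right (A : Connection I M) (g : RiemannianMetric I M)
    (X Y Z : VectorField I M) : covDerivMetric A g X Y Z = covDerivMetric A g X Z Y := by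
  funext x
  simp only [covDerivMetric, g.symm _ (Y _), g.symm x (A.op X Y x)]
  ring

theorem covDerivMetric_eq_covDeriv2OneForm {A : Connection I M} {θ : OneForm I M}
    {g : RiemannianMetric I M}
    (hg : ∀ X Y, IsSmoothVF I X → IsSmoothVF I Y → ∀ x,
      g.val x (X x) (Y x) = covDerivOneForm A θ X Y x - θ.val x (X x) * θ.val x (Y x))
    {X Y Z : VectorField I M} (hX : IsSmoothVF I X) (hY : IsSmoothVF I Y)
    (hZ : IsSmoothVF I Z) (x : M) :
    covDerivMetric A g X Y Z x = covDeriv2OneForm A θ X Y Z x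
      - covDerivOneForm A θ X Y x * θ.val x (Z x)
      - θ.val x (Y x) * covDerivOneForm A θ X Z x := by
  have hθY := θ.smooth Y hY
  have hθZ := θ.smooth Z hZ
  have hgYZ : (fun y => g.val y (Y y) (Z y))
      = fun y => covDerivOneForm A θ Y Z y - θ.val y (Y y) * θ.val y (Z y) :=
    funext (hg Y Z hY hZ)
  have hderiv : dirDeriv I X (fun y => g.val y (Y y) (Z y)) x
      = dirDeriv I X (covDerivOneForm A θ Y Z) x
        - (θ.val x (Y x) * dirDeriv I X (fun y => θ.val y (Z y)) x
          + θ.val x (Z x) * dirDeriv I X (fun y => θ.val y (Y y)) x) := by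
    rw [hgYZ, dirDeriv_sub_right X ((isSmoothF_covDerivOneForm A θ hY hZ).mdifferentiableAt x)
      (IsSmoothF.mdifferentiableAt (f := fun y => θ.val y (Y y) * θ.val y (Z y))
        (ContMDiff.mul hθY hθZ) x),
      dirDeriv_mul_right X (hθY.mdifferentiableAt x) (hθZ.mdifferentiableAt x)]
  simp only [covDerivMetric, covDeriv2OneForm]
  rw [hderiv, hg _ Z (A.smooth X Y hX hY) hZ, hg Y _ hY (A.smooth X Z hX hZ)]
  simp only [covDerivOneForm]
  ring

/-- Let `(M, ∇)` be a flat affine manifold and `θ` a closed 1-form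
such that the bilinear form `g_θ := ∇θ - θ ⊗ θ` is positive definite (i.e., it is the
value of a Riemannian metric `g`).  Then `(M, ∇, g_θ, θ)` is an l.c.H. manifold. -/
theorem statement15 (A : Connection I M) (hA : A.IsFlatAffine) (θ : OneForm I M)
    (hθ : θ.IsClosed) (g : RiemannianMetric I M)
    (hg : ∀ X Y, IsSmoothVF I X → IsSmoothVF I Y → ∀ x,
      g.val x (X x) (Y x) = covDerivOneForm A θ X Y x - θ.val x (X x) * θ.val x (Y x)) :
    IsLcH A g θ := by
  refine ⟨hA, hθ, fun X Y Z hX hY hZ => ⟨funext fun x => ?_, funext fun x => ?_⟩⟩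
  · beta_reduce
    rw [covDerivMetric_eq_covDeriv2OneForm hg hX hY hZ,
      covDerivMetric_eq_covDeriv2OneForm hg hY hX hZ, hg Y Z hY hZ, hg X Z hX hZ]
    linear_combination congrFun (covDeriv2OneForm_comm hA θ hX hY hZ) x
      - θ.val x (Z x) * congrFun (covDerivOneForm_comm hA.1 hθ hX hY) x
  · beta_reduce
    rw [covDerivMetric_swap_right, g.symm x (Y x)]

end LCH
end
end
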